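/- Let S = {(v,w) ∈ ℕ² : v + w ≤ 3} index the degree-3 total order basis on the reference quadrilateral. Let M be the diagonal real S×S matrix with M_{(v,w),(v,w)} = 4/((2v+1)(2w+1)). For real parameters q0, q1, q2, let Q be the symmetric S×S matrix whose only nonzero entries (listing one entry of each symmetric pair) are Q_{(0,3),(0,3)} = Q_{(3,0),(3,0)} = q0, Q_{(1,2),(1,2)} = Q_{(2,1),(2,1)} = q1, Q_{(0,3),(2,1)} = q2, and Q_{(1,2),(3,0)} = q2. Then M + Q is positive definite if and only if q0 > −4/7, q1 > −4/15, and 28·q0 + 105·q0·q1 + 60·q1 − 105·q2² + 16 > 0. -/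

import Mathlib

/-- The index set of the degree-3 total order basis: modes `(v,w)` with `v + w ≤ 3`. -/
def TO3 : Type := {p : Fin 4 × Fin 4 // (p.1 : ℕ) + (p.2 : ℕ) ≤ 3}

instance : Fintype TO3 := Subtype.fintype _
instance : DecidableEq TO3 := Subtype.instDecidableEq

/-- Modal mass matrix of the degree-3 total order Legendre basis:
`M_{(v,w),(v,w)} = 4/((2v+1)(2w+1))`. -/
noncomputable def massTO3 : Matrix TO3 TO3 ℝ :=
  Matrix.diagonal fun p =>
    (4 : ℝ) / (((2 * (p.val.1 : ℕ) + 1) * (2 * (p.val.2 : ℕ) + 1) : ℕ) : ℝ)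

/-- The symmetric filter matrix `Q(q0, q1, q2)` for the degree-3 total order basis. -/
def filterTO3 (q0 q1 q2 : ℝ) : Matrix TO3 TO3 ℝ :=
  fun i j =>
    if (i.val = (0, 3) ∧ j.val = (0, 3)) ∨ (i.val = (3, 0) ∧ j.val = (3, 0)) then q0
    else if (i.val = (1, 2) ∧ j.val = (1, 2)) ∨ (i.val = (2, 1) ∧ j.val = (2, 1)) then q1
    else if (i.val = (0, 3) ∧ j.val = (2, 1)) ∨ (i.val = (2, 1) ∧ j.val = (0, 3)) ∨
            (i.val = (1, 2) ∧ j.val = (3, 0)) ∨ (i.val = (3, 0) ∧ j.val = (1, 2)) then q2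
    else 0

/-!
Ordering the modes so that `(0,3), (2,1)` and `(3,0), (1,2)` are adjacent, `M + Q` is block
diagonal: the six modes that `Q` does not touch keep their positive mass entries, and each of
the two pairs carries the same block `!![4/7 + q0, q2; q2, 4/15 + q1]`. Hence `M + Q` is positive
definite iff that `2 × 2` block is, i.e. iff `4/7 + q0 > 0` and its determinant is positive;
`105` times the determinant is `28 q0 + 105 q0 q1 + 60 q1 - 105 q2² + 16`.
-/

open Matrix

theorem Matrix.posDef_fin_two_iff {a b c : ℝ} :
    (!![a, c; c, b]).PosDef ↔ 0 < a ∧ 0 < a * b - c ^ 2 := by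
  have form (x : Fin 2 → ℝ) :
      star x ⬝ᵥ !![a, c; c, b] *ᵥ x = a * x 0 ^ 2 + 2 * c * x 0 * x 1 + b * x 1 ^ 2 := by
    simp only [dotProduct, Pi.star_apply, star_trivial, mulVec, of_apply, cons_val', cons_val_fin_one,
      Fin.sum_univ_two, cons_val_zero, cons_val_one]
    ring
  simp only [posDef_iff_dotProduct_mulVec, form]
  constructor
  · rintro ⟨-, h⟩
    have ha : 0 < a := by simpa using h (x := ![1, 0]) (by simp)
    refine ⟨ha, pos_of_mul_pos_right ?_ ha.le⟩
    -- the form at `(c, -a)` is `a (ab - c²)`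
    have := h (x := ![c, -a]) (by simp [ha.ne'])
    simp only [cons_val_zero, cons_val_one, mul_neg, even_two, Even.neg_pow] at this
    nlinarith
  · rintro ⟨ha, hdet⟩
    refine ⟨by ext i j; fin_cases i <;> fin_cases j <;> rfl, fun x hx => ?_⟩
    rcases eq_or_ne (x 1) 0 with h1 | h1
    · have h0 : x 0 ≠ 0 := fun h0 => hx (funext fun i => by fin_cases i <;> simp [h0, h1])
      have := sq_pos_of_ne_zero h0
      simp only [h1]
      nlinarith
    · -- `a · form = (a x₀ + c x₁)² + (ab - c²) x₁²`
      refine pos_of_mul_pos_right ?_ ha.le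
      nlinarith [sq_nonneg (a * x 0 + c * x 1), mul_pos hdet (sq_pos_of_ne_zero h1)]

namespace TO3

def m00 : TO3 := ⟨(0, 0), by decide⟩
def m01 : TO3 := ⟨(0, 1), by decide⟩
def m02 : TO3 := ⟨(0, 2), by decide⟩
def m03 : TO3 := ⟨(0, 3), by decide⟩
def m10 : TO3 := ⟨(1, 0), by decide⟩
def m11 : TO3 := ⟨(1, 1), by decide⟩
def m12 : TO3 := ⟨(1, 2), by decide⟩
def m20 : TO3 := ⟨(2, 0), by decide⟩
def m21 : TO3 := ⟨(2, 1), by decide⟩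
def m30 : TO3 := ⟨(3, 0), by decide⟩

theorem univ_eq : (Finset.univ : Finset TO3) =
    {m00, m01, m02, m03, m10, m11, m12, m20, m21, m30} := by
  decide

theorem eq_or (p : TO3) : p = m00 ∨ p = m01 ∨ p = m02 ∨ p = m03 ∨ p = m10 ∨
    p = m11 ∨ p = m12 ∨ p = m20 ∨ p = m21 ∨ p = m30 := by
  revert p
  decide

theorem sum_univ {M : Type*} [AddCommMonoid M] (f : TO3 → M) : ∑ p, f p =
    f m00 + f m01 + f m02 + f m03 + f m10 + f m11 + f m12 + f m20 + f m21 + f m30 := by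
  rw [univ_eq]
  repeat rw [Finset.sum_insert (by decide)]
  rw [Finset.sum_singleton]
  abel

end TO3

open TO3

theorem filterTO3_isHermitian (q0 q1 q2 : ℝ) : (filterTO3 q0 q1 q2).IsHermitian := by
  ext i j
  simp only [conjTranspose_apply, star_trivial, filterTO3]
  grind

noncomputable def blockTO3 (q0 q1 q2 : ℝ) : Matrix (Fin 2) (Fin 2) ℝ :=
  !![4 / 7 + q0, q2; q2, 4 / 15 + q1]

theorem dotProduct_mulVec_massTO3_add_filterTO3 (q0 q1 q2 : ℝ) (x : TO3 → ℝ) :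
    x ⬝ᵥ (massTO3 + filterTO3 q0 q1 q2) *ᵥ x =
      4 * x m00 ^ 2 + 4 / 3 * x m01 ^ 2 + 4 / 5 * x m02 ^ 2 + 4 / 3 * x m10 ^ 2
        + 4 / 9 * x m11 ^ 2 + 4 / 5 * x m20 ^ 2
        + ![x m03, x m21] ⬝ᵥ blockTO3 q0 q1 q2 *ᵥ ![x m03, x m21]
        + ![x m30, x m12] ⬝ᵥ blockTO3 q0 q1 q2 *ᵥ ![x m30, x m12] := by
  simp only [blockTO3, dotProduct, mulVec, Matrix.add_apply, sum_univ, Fin.sum_univ_two, massTO3,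
    diagonal_apply]
  simp +decide only [filterTO3,
    m00, m01, m02, m03, m10, m11, m12, m20, m21, m30, if_true, if_false]
  norm_num
  ring

theorem posDef_massTO3_add_filterTO3_iff (q0 q1 q2 : ℝ) :
    (massTO3 + filterTO3 q0 q1 q2).PosDef ↔ (blockTO3 q0 q1 q2).PosDef := by
  constructor
  · intro h
    have hsub : (massTO3 + filterTO3 q0 q1 q2).submatrix ![m03, m21] ![m03, m21] =
        blockTO3 q0 q1 q2 := by
      ext i j
      simp only [submatrix_apply, Matrix.add_apply, massTO3, diagonal_apply]
      fin_cases i <;> fin_cases j <;>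
        simp +decide [blockTO3, filterTO3, m03, m21]
    exact hsub ▸ h.submatrix (by decide)
  · intro hB
    refine .of_dotProduct_mulVec_pos ((isHermitian_diagonal _).add (filterTO3_isHermitian _ _ _))
      fun x hx => ?_
    have hB_pos {u v : ℝ} (h : u ≠ 0 ∨ v ≠ 0) :
        0 < ![u, v] ⬝ᵥ blockTO3 q0 q1 q2 *ᵥ ![u, v] :=
      hB.dotProduct_mulVec_pos (x := ![u, v]) fun h0 => by simp_all
    have hB_nonneg (u v : ℝ) : 0 ≤ ![u, v] ⬝ᵥ blockTO3 q0 q1 q2 *ᵥ ![u, v] :=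
      hB.posSemidef.dotProduct_mulVec_nonneg _
    obtain ⟨p, hp⟩ : ∃ p, x p ≠ 0 := Function.ne_iff.mp hx
    rw [star_trivial, dotProduct_mulVec_massTO3_add_filterTO3]
    have := hB_nonneg (x m03) (x m21)
    have := hB_nonneg (x m30) (x m12)
    rcases TO3.eq_or p with rfl | rfl | rfl | rfl | rfl | rfl | rfl | rfl | rfl | rfl <;>
    first
      | have := hB_pos (u := x m03) (v := x m21) (by tauto); positivity
      | have := hB_pos (u := x m30) (v := x m12) (by tauto); positivity
      | positivity

/-- For the degree-3 total order basis, `M + Q` is positive definite iff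
`q0 > -4/7`, `q1 > -4/15`, and `28 q0 + 105 q0 q1 + 60 q1 - 105 q2² + 16 > 0`. -/
theorem stmt_3 (q0 q1 q2 : ℝ) :
    (massTO3 + filterTO3 q0 q1 q2).PosDef ↔
      q0 > -4 / 7 ∧ q1 > -4 / 15 ∧
      28 * q0 + 105 * q0 * q1 + 60 * q1 - 105 * q2 ^ 2 + 16 > 0 := by
  rw [posDef_massTO3_add_filterTO3_iff, blockTO3, posDef_fin_two_iff]
  constructor
  · rintro ⟨ha, hdet⟩
    exact ⟨by linarith, by nlinarith [sq_nonneg q2], by linarith⟩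
  · rintro ⟨h0, -, hdet⟩
    constructor <;> linarith
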